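/- arXiv:2512.19600 — 4 statements merged into one kernel-verified Lean document; each statement's English description precedes it below -/
import Mathlib

section
/- Fix a real number q and an integer m ≥ 1 with (q)_m = q(q-1)···(q-m+1) ≠ 0. Then for every n ≥ 1, the number of distinct values {P_G(q) : G a simple graph on n+m vertices} is at least the number of distinct values {P_G(q-m) : G a simple graph on n vertices}. -/
open Polynomial

noncomputable def chromaticPolynomial {V : Type*} [Fintype V] (G : SimpleGraph V) :
    Polynomial ℝ := by
  classical
  exact ∑ A ∈ G.edgeFinset.powerset,
    ((-1 : ℝ) ^ A.card) •
      (X ^ Nat.card (SimpleGraph.fromEdgeSet (↑A : Set (Sym2 V))).ConnectedComponent)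

/-!
Whitney's expansion `P_G = ∑_{A ⊆ E} (-1)^|A| X^{c(A)}` evaluates at `k = |α|` to the number of
proper `α`-colourings: `k^{c(A)}` counts the colourings under which every edge of `A` is
monochromatic, and summing `(-1)^|A|` over the subsets `A` of the monochromatic edges of a
colouring leaves `1` exactly for the proper ones. A proper colouring of the join `G ∨ K_m` is an
injective colouring of `K_m` together with a colouring of `G` by the `k - m` unused colours, so
`P_{G ∨ K_m} = (X)_m · P_G(X - m)`. Multiplication by `(q)_m ≠ 0` thus injects the values
`P_G(q - m)` on graphs with `n` vertices into the values `P_H(q)` on graphs with `n + m` vertices.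
-/

open Finset

lemma Finset.filter_forall_mem_powerset {α : Type*} (s : Finset α) (p : α → Prop)
    [DecidablePred p] :
    s.powerset.filter (fun A => ∀ a ∈ A, p a) = (s.filter p).powerset := by
  ext A
  simp only [mem_filter, mem_powerset, subset_iff]
  grind

lemma Set.natCard_compl_range {α β : Type*} [Finite β] {f : α → β} (hf : f.Injective) :
    Nat.card ↥(Set.range f)ᶜ = Nat.card β - Nat.card α := by
  rw [Nat.card_coe_set_eq, Set.ncard_compl, Set.ncard_range_of_injective hf]

lemma Polynomial.eq_of_eval_natCast_add_eq {R : Type*} [CommRing R] [IsDomain R] [CharZero R]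
    {p q : R[X]} (m : ℕ) (h : ∀ j : ℕ, p.eval ((j + m : ℕ) : R) = q.eval ((j + m : ℕ) : R)) :
    p = q :=
  eq_of_infinite_eval_eq p q <| Set.infinite_of_injective_forall_mem
    (fun _ _ hij => by simpa using hij) h

namespace SimpleGraph

variable {V W α : Type*}

lemma Walk.apply_eq_of_forall_adj {H : SimpleGraph V} {f : V → α}
    (hf : ∀ v w, H.Adj v w → f v = f w) {v w : V} (p : H.Walk v w) : f v = f w := by
  induction p with
  | nil => rfl
  | cons h _ ih => exact (hf _ _ h).trans ih

def constOnAdjEquiv (H : SimpleGraph V) (α : Type*) :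
    {f : V → α // ∀ v w, H.Adj v w → f v = f w} ≃ (H.ConnectedComponent → α) where
  toFun f := ConnectedComponent.lift f.1 fun _ _ p _ => p.apply_eq_of_forall_adj f.2
  invFun g := ⟨g ∘ H.connectedComponentMk, fun _ _ h => by
    simp only [Function.comp_apply, ConnectedComponent.connectedComponentMk_eq_of_adj h]⟩
  left_inv _ := rfl
  right_inv g := funext <| ConnectedComponent.ind fun _ => rfl

lemma card_constOnAdj [Finite V] (H : SimpleGraph V) (α : Type*) :
    Nat.card {f : V → α // ∀ v w, H.Adj v w → f v = f w} =
      Nat.card α ^ Nat.card H.ConnectedComponent := by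
  rw [Nat.card_congr (constOnAdjEquiv H α), Nat.card_fun]

lemma forall_fromEdgeSet_adj_eq_iff (s : Set (Sym2 V)) (f : V → α) :
    (∀ v w, (fromEdgeSet s).Adj v w → f v = f w) ↔ ∀ e ∈ s, (e.map f).IsDiag := by
  refine ⟨fun h e he => ?_, fun h v w hvw => ?_⟩
  · induction e with
    | _ v w =>
      rw [Sym2.map_mk, Sym2.mk_isDiag_iff]
      by_cases hvw : v = w
      · rw [hvw]
      · exact h v w ⟨he, hvw⟩
  · simpa using h _ hvw.1

def coloringEquivEdgeNotDiag (G : SimpleGraph V) (α : Type*) :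
    G.Coloring α ≃ {f : V → α // ∀ e ∈ G.edgeSet, ¬(e.map f).IsDiag} where
  toFun C := ⟨C, fun e he => by
    induction e with
    | _ v w => simpa using C.valid he⟩
  invFun f := Coloring.mk f.1 fun {v w} h => by simpa using f.2 s(v, w) h
  left_inv _ := rfl
  right_inv _ := rfl

theorem eval_chromaticPolynomial_natCard [Fintype V] [Finite α] (G : SimpleGraph V) :
    (chromaticPolynomial G).eval (Nat.card α : ℝ) = Nat.card (G.Coloring α) := by
  classical
  have := Fintype.ofFinite α
  let mono (f : V → α) := G.edgeFinset.filter fun e => (e.map f).IsDiag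
  calc (chromaticPolynomial G).eval (Nat.card α : ℝ)
      = ∑ A ∈ G.edgeFinset.powerset,
          (-1 : ℝ) ^ #A * Nat.card {f : V → α // ∀ e ∈ A, (e.map f).IsDiag} := by
        simp only [chromaticPolynomial, eval_finsetSum, eval_smul, eval_pow, eval_X, smul_eq_mul]
        refine sum_congr rfl fun A _ => ?_
        rw [← Nat.cast_pow, ← card_constOnAdj, Nat.card_congr (Equiv.subtypeEquivRight
          fun f => forall_fromEdgeSet_adj_eq_iff (A : Set (Sym2 V)) f)]
        rfl
    _ = ∑ f : V → α, ∑ A ∈ (mono f).powerset, (-1 : ℝ) ^ #A := by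
        simp only [Nat.card_eq_fintype_card, Fintype.card_subtype, card_filter, Nat.cast_sum,
          Nat.cast_ite, Nat.cast_one, Nat.cast_zero, mul_sum, mul_ite, mul_one, mul_zero]
        rw [sum_comm]
        refine sum_congr rfl fun f _ => ?_
        rw [← filter_forall_mem_powerset, sum_filter]
        congr!
    _ = ∑ f : V → α, if mono f = ∅ then 1 else 0 := by
        refine sum_congr rfl fun f _ => ?_
        exact_mod_cast sum_powerset_neg_one_pow_card
    _ = Nat.card (G.Coloring α) := by
        rw [sum_boole, Nat.card_congr (coloringEquivEdgeNotDiag G α), Nat.card_eq_fintype_card,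
          Fintype.card_subtype]
        simp [mono, filter_eq_empty_iff]

theorem chromaticPolynomial_congr [Fintype V] [Fintype W] {G : SimpleGraph V}
    {G' : SimpleGraph W} (e : G ≃g G') : chromaticPolynomial G = chromaticPolynomial G' := by
  refine eq_of_eval_natCast_add_eq 0 fun k => ?_
  rw [← Nat.card_fin (k + 0), eval_chromaticPolynomial_natCard, eval_chromaticPolynomial_natCard,
    Nat.card_congr (coloringCongr e (Equiv.refl _))]

def join (G : SimpleGraph V) (H : SimpleGraph W) : SimpleGraph (V ⊕ W) :=
  (G ⊕g H) ⊔ completeBipartiteGraph V W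

section join

variable {G : SimpleGraph V} {H : SimpleGraph W}

@[simp] lemma join_adj_inl_inl {v v' : V} : (G.join H).Adj (.inl v) (.inl v') ↔ G.Adj v v' := by
  simp [join]

@[simp] lemma join_adj_inr_inr {w w' : W} : (G.join H).Adj (.inr w) (.inr w') ↔ H.Adj w w' := by
  simp [join]

@[simp] lemma join_adj_inl_inr {v : V} {w : W} : (G.join H).Adj (.inl v) (.inr w) := by
  simp [join]

@[simp] lemma join_adj_inr_inl {v : V} {w : W} : (G.join H).Adj (.inr w) (.inl v) := by
  simp [join]

end join

def joinColoringEquiv (G : SimpleGraph V) (H : SimpleGraph W) (α : Type*) :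
    (G.join H).Coloring α ≃ Σ c : H.Coloring α, G.Coloring ↥(Set.range c)ᶜ where
  toFun C :=
    ⟨Coloring.mk (C ∘ Sum.inr) fun h => C.valid (join_adj_inr_inr.2 h),
      Coloring.mk (fun v => ⟨C (.inl v), fun ⟨_, hw⟩ => C.valid join_adj_inl_inr hw.symm⟩)
        fun h hC => C.valid (join_adj_inl_inl.2 h) (congrArg Subtype.val hC)⟩
  invFun c := Coloring.mk (Sum.elim (fun v => c.2 v) c.1) <| by
    rintro (v | w) (v' | w') h hc
    · exact c.2.valid (join_adj_inl_inl.1 h) (Subtype.ext hc)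
    · exact (c.2 v).2 ⟨w', hc.symm⟩
    · exact (c.2 v').2 ⟨w, hc⟩
    · exact c.1.valid (join_adj_inr_inr.1 h) hc
  left_inv C := by ext (v | w) <;> rfl
  right_inv _ := rfl

def topColoringEquivEmbedding (W α : Type*) : (⊤ : SimpleGraph W).Coloring α ≃ (W ↪ α) where
  toFun C := ⟨C, C.injective_of_top_hom⟩
  invFun f := Coloring.mk f fun h => f.injective.ne h
  left_inv _ := rfl
  right_inv _ := rfl

lemma card_coloring_top [Fintype W] [Fintype α] :
    Nat.card ((⊤ : SimpleGraph W).Coloring α) =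
      (Fintype.card α).descFactorial (Fintype.card W) := by
  classical
  rw [Nat.card_congr (topColoringEquivEmbedding W α), Nat.card_eq_fintype_card,
    Fintype.card_embedding_eq]

theorem chromaticPolynomial_join_top [Fintype V] [Fintype W] (G : SimpleGraph V) :
    chromaticPolynomial (G.join (⊤ : SimpleGraph W)) =
      descPochhammer ℝ (Fintype.card W) *
        (chromaticPolynomial G).comp (X - C (Fintype.card W : ℝ)) := by
  set m := Fintype.card W
  refine eq_of_eval_natCast_add_eq m fun j => ?_
  set k := j + m
  have hterm (c : (⊤ : SimpleGraph W).Coloring (Fin k)) :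
      (Nat.card (G.Coloring ↥(Set.range c)ᶜ) : ℝ) = (chromaticPolynomial G).eval (k - m : ℝ) := by
    rw [← eval_chromaticPolynomial_natCard, Set.natCard_compl_range c.injective_of_top_hom,
      Nat.card_fin, Nat.card_eq_fintype_card, Nat.cast_sub (Nat.le_add_left m j)]
  rw [eval_mul, descPochhammer_eval_eq_descFactorial, eval_comp, eval_sub, eval_X, eval_C,
    ← Nat.card_fin k, eval_chromaticPolynomial_natCard, Nat.card_congr (joinColoringEquiv _ _ _),
    Nat.card_sigma, Nat.cast_sum, sum_congr rfl fun c _ => hterm c, sum_const, card_univ,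
    ← Nat.card_eq_fintype_card, card_coloring_top, Fintype.card_fin, nsmul_eq_mul, Nat.card_fin]

end SimpleGraph

lemma exists_eval_chromaticPolynomial_eq_descPochhammer_mul {n : ℕ} (G : SimpleGraph (Fin n))
    (m : ℕ) (q : ℝ) : ∃ H : SimpleGraph (Fin (n + m)),
      (chromaticPolynomial H).eval q =
        (descPochhammer ℝ m).eval q * (chromaticPolynomial G).eval (q - m) := by
  refine ⟨(G.join (⊤ : SimpleGraph (Fin m))).map finSumFinEquiv, ?_⟩
  rw [← SimpleGraph.chromaticPolynomial_congr (SimpleGraph.Iso.map finSumFinEquiv _),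
    SimpleGraph.chromaticPolynomial_join_top, eval_mul, eval_comp, eval_sub, eval_X, eval_C,
    Fintype.card_fin]

theorem card_spectrum_shift_general (q : ℝ) (m n : ℕ)
    (hq : ∏ i ∈ Finset.range m, (q - (i : ℝ)) ≠ 0) :
    {y : ℝ | ∃ G : SimpleGraph (Fin n),
        y = (chromaticPolynomial G).eval (q - (m : ℝ))}.ncard ≤
      {y : ℝ | ∃ G : SimpleGraph (Fin (n + m)),
        y = (chromaticPolynomial G).eval q}.ncard := by
  rw [← descPochhammer_eval_eq_prod_range] at hq
  refine Set.ncard_le_ncard_of_injOn ((descPochhammer ℝ m).eval q * ·) ?_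
    (mul_right_injective₀ hq).injOn ?_
  · rintro _ ⟨G, rfl⟩
    obtain ⟨H, hH⟩ := exists_eval_chromaticPolynomial_eq_descPochhammer_mul G m q
    exact ⟨H, hH.symm⟩
  · exact (Set.finite_range fun H : SimpleGraph (Fin (n + m)) =>
      (chromaticPolynomial H).eval q).subset fun y ⟨H, hH⟩ => ⟨H, hH.symm⟩

/-- if `(q)_m ≠ 0`, then the number of values of `P_G(q)` on graphs with
`n + m` vertices is at least the number of values of `P_G(q - m)` on graphs with
`n` vertices. -/
theorem card_spectrum_shift (q : ℝ) (m n : ℕ) (hm : 1 ≤ m) (hn : 1 ≤ n)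
    (hq : ∏ i ∈ Finset.range m, (q - (i : ℝ)) ≠ 0) :
    {y : ℝ | ∃ G : SimpleGraph (Fin n),
        y = (chromaticPolynomial G).eval (q - (m : ℝ))}.ncard ≤
      {y : ℝ | ∃ G : SimpleGraph (Fin (n + m)),
        y = (chromaticPolynomial G).eval q}.ncard :=
  card_spectrum_shift_general q m n hq
end

section
/- Let λ > 0 and define the maps f_S(r) = (r+1)/(λ+1) and f_B(r) = (λ+1)r/(r+λ+2) on the interval I = (0, 1/λ]. Then f_S(I) ⊆ (1/(λ+1), 1/λ], f_B(I) ⊆ (0, 1/(λ+1)], both images are contained in I, and f_S(I) ∩ f_B(I) = ∅. -/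
/-- ping–pong images for `f_S(r) = (r+1)/(λ+1)` and
`f_B(r) = (λ+1)r/(r+λ+2)` on `I = (0, 1/λ]`. -/
theorem pingpong_negative (lam : ℝ) (hlam : 0 < lam) :
    (fun r : ℝ => (r + 1) / (lam + 1)) '' Set.Ioc 0 (1 / lam)
        ⊆ Set.Ioc (1 / (lam + 1)) (1 / lam) ∧
    (fun r : ℝ => (lam + 1) * r / (r + lam + 2)) '' Set.Ioc 0 (1 / lam)
        ⊆ Set.Ioc 0 (1 / (lam + 1)) ∧
    (fun r : ℝ => (r + 1) / (lam + 1)) '' Set.Ioc 0 (1 / lam)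
        ⊆ Set.Ioc 0 (1 / lam) ∧
    (fun r : ℝ => (lam + 1) * r / (r + lam + 2)) '' Set.Ioc 0 (1 / lam)
        ⊆ Set.Ioc 0 (1 / lam) ∧
    Disjoint ((fun r : ℝ => (r + 1) / (lam + 1)) '' Set.Ioc 0 (1 / lam))
      ((fun r : ℝ => (lam + 1) * r / (r + lam + 2)) '' Set.Ioc 0 (1 / lam)) := by
  have hl1 : (0:ℝ) < lam + 1 := by linarith
  have hS : (fun r : ℝ => (r + 1) / (lam + 1)) '' Set.Ioc 0 (1 / lam)
      ⊆ Set.Ioc (1 / (lam + 1)) (1 / lam) := by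
    rintro y ⟨r, ⟨hr0, hr1⟩, rfl⟩
    have hr1' : r * lam ≤ 1 := (le_div_iff₀ hlam).mp hr1
    constructor
    · rw [div_lt_div_iff₀ hl1 hl1]; nlinarith
    · rw [div_le_div_iff₀ hl1 hlam]; nlinarith
  have hB : (fun r : ℝ => (lam + 1) * r / (r + lam + 2)) '' Set.Ioc 0 (1 / lam)
      ⊆ Set.Ioc 0 (1 / (lam + 1)) := by
    rintro y ⟨r, ⟨hr0, hr1⟩, rfl⟩
    have hr1' : r * lam ≤ 1 := (le_div_iff₀ hlam).mp hr1
    have hden : (0:ℝ) < r + lam + 2 := by linarith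
    constructor
    · positivity
    · rw [div_le_div_iff₀ hden hl1]; nlinarith
  have hsub : Set.Ioc (1 / (lam + 1)) (1 / lam) ⊆ Set.Ioc 0 (1 / lam) :=
    Set.Ioc_subset_Ioc_left (by positivity)
  have hsub2 : Set.Ioc 0 (1 / (lam + 1)) ⊆ Set.Ioc 0 (1 / lam) :=
    Set.Ioc_subset_Ioc_right (by
      apply one_div_le_one_div_of_le hlam; linarith)
  refine ⟨hS, hB, hS.trans hsub, hB.trans hsub2, ?_⟩
  rw [Set.disjoint_left]
  intro y hy1 hy2
  exact absurd (hB hy2).2 (not_le.mpr (hS hy1).1)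
end

section
/- Let λ > 0 and consider the 2×2 real matrices S = [[1,1],[0,λ+1]] and B = [[λ+1,0],[1,λ+2]]. If w and w' are two words in the free semigroup on {S, B} of the same length and w·v₀ = w'·v₀ where v₀ = (λ, λ²)ᵀ, then w = w' (as words). -/
def wordMatrix (S B : Matrix (Fin 2) (Fin 2) ℝ) (w : List Bool) :
    Matrix (Fin 2) (Fin 2) ℝ :=
  ((w.map fun c => if c then S else B).reverse).prod

lemma wordMatrix_append (S B : Matrix (Fin 2) (Fin 2) ℝ) (w : List Bool) (c : Bool) :
    wordMatrix S B (w ++ [c]) = (if c then S else B) * wordMatrix S B w := by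
  simp [wordMatrix]

lemma invariant (lam : ℝ) (hlam : 0 < lam) (w : List Bool) :
    0 < (wordMatrix !![1, 1; 0, lam + 1] !![lam + 1, 0; 1, lam + 2] w).mulVec
          ![lam, lam ^ 2] 0
    ∧ lam * (wordMatrix !![1, 1; 0, lam + 1] !![lam + 1, 0; 1, lam + 2] w).mulVec
          ![lam, lam ^ 2] 0
      ≤ (wordMatrix !![1, 1; 0, lam + 1] !![lam + 1, 0; 1, lam + 2] w).mulVec
          ![lam, lam ^ 2] 1 := by
  induction w using List.reverseRecOn with
  | nil => simp [wordMatrix, Matrix.one_mulVec]; constructor; exact hlam; nlinarith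
  | append_singleton w c ih =>
    rw [wordMatrix_append, ← Matrix.mulVec_mulVec]
    obtain ⟨h0, h1⟩ := ih
    set v := (wordMatrix !![1, 1; 0, lam + 1] !![lam + 1, 0; 1, lam + 2] w).mulVec
      ![lam, lam ^ 2] with hv
    cases c <;>
      simp [Matrix.mulVec, dotProduct, Fin.sum_univ_two] <;>
      constructor <;> nlinarith

lemma sep (lam : ℝ) (hlam : 0 < lam) (c c' : Bool) (u u' : Fin 2 → ℝ)
    (hu0 : 0 < u 0) (hu1 : lam * u 0 ≤ u 1)
    (hu0' : 0 < u' 0) (hu1' : lam * u' 0 ≤ u' 1)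
    (h : ((if c then !![1, 1; 0, lam + 1] else !![lam + 1, 0; 1, lam + 2]) :
        Matrix (Fin 2) (Fin 2) ℝ).mulVec u
      = ((if c' then !![1, 1; 0, lam + 1] else !![lam + 1, 0; 1, lam + 2]) :
        Matrix (Fin 2) (Fin 2) ℝ).mulVec u') :
    c = c' ∧ u = u' := by
  have h0 := congrFun h 0
  have h1 := congrFun h 1
  cases c <;> cases c' <;>
    simp [Matrix.mulVec, dotProduct, Fin.sum_univ_two] at h0 h1
  · have hne : (lam + 1 : ℝ) ≠ 0 := by positivity
    replace h0 := h0.resolve_right hne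
    have h2 : u 1 = u' 1 := by
      have h3 : (lam + 2) * u 1 = (lam + 2) * u' 1 := by linarith
      exact mul_left_cancel₀ (by positivity) h3
    refine ⟨rfl, funext fun i => ?_⟩
    fin_cases i <;> simp [h0, h2]
  · exfalso
    nlinarith [mul_le_mul_of_nonneg_left hu1' (by linarith : (0:ℝ) ≤ lam + 2),
      mul_pos hlam hu0, mul_pos hlam hu0']
  · exfalso
    nlinarith [mul_le_mul_of_nonneg_left hu1 (by linarith : (0:ℝ) ≤ lam + 2),
      mul_pos hlam hu0, mul_pos hlam hu0']
  · have hne : (lam + 1 : ℝ) ≠ 0 := by positivity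
    replace h1 := h1.resolve_right hne
    refine ⟨rfl, funext fun i => ?_⟩
    fin_cases i <;> simp [h1] <;> linarith

/-- for `λ > 0` and `S = [[1,1],[0,λ+1]]`, `B = [[λ+1,0],[1,λ+2]]`,
two words of the same length acting equally on `v₀ = (λ, λ²)ᵀ` are equal. -/
theorem free_action_negative (lam : ℝ) (hlam : 0 < lam) (w w' : List Bool)
    (hlen : w.length = w'.length)
    (h : (wordMatrix !![1, 1; 0, lam + 1] !![lam + 1, 0; 1, lam + 2] w).mulVec
            ![lam, lam ^ 2]
        = (wordMatrix !![1, 1; 0, lam + 1] !![lam + 1, 0; 1, lam + 2] w').mulVec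
            ![lam, lam ^ 2]) :
    w = w' := by
  induction w using List.reverseRecOn generalizing w' with
  | nil =>
    cases w' using List.reverseRecOn with
    | nil => rfl
    | append_singleton t c => simp at hlen
  | append_singleton t c ih =>
    cases w' using List.reverseRecOn with
    | nil => simp at hlen
    | append_singleton t' c' =>
      rw [wordMatrix_append, wordMatrix_append, ← Matrix.mulVec_mulVec,
        ← Matrix.mulVec_mulVec] at h
      obtain ⟨h0, h1⟩ := invariant lam hlam t
      obtain ⟨h0', h1'⟩ := invariant lam hlam t'
      obtain ⟨hc, hu⟩ := sep lam hlam c c' _ _ h0 h1 h0' h1' h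
      have ht : t = t' := by
        apply ih
        · simpa using hlen
        · exact hu
      rw [hc, ht]
end

section
/- For q = 3/2, define the maps f_K(r) = 4r - 2 and f_L(r) = 2/(5 - 2r) on the set I ∪ J where I = (-∞, 0] and J = (0, 1/2]. Then f_K(I ∪ J) ⊆ I and f_L(I ∪ J) ⊆ J; in particular the images are disjoint. -/
/-- for `q = 3/2`, with `f_K(r) = 4r - 2`, `f_L(r) = 2/(5 - 2r)`,
`I = (-∞, 0]` and `J = (0, 1/2]`, we have `f_K(I ∪ J) ⊆ I` and `f_L(I ∪ J) ⊆ J`;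
in particular the two images are disjoint. -/
theorem pingpong_three_halves :
    (fun r : ℝ => 4 * r - 2) '' (Set.Iic (0 : ℝ) ∪ Set.Ioc 0 (1 / 2))
        ⊆ Set.Iic (0 : ℝ) ∧
    (fun r : ℝ => 2 / (5 - 2 * r)) '' (Set.Iic (0 : ℝ) ∪ Set.Ioc 0 (1 / 2))
        ⊆ Set.Ioc (0 : ℝ) (1 / 2) ∧
    Disjoint ((fun r : ℝ => 4 * r - 2) '' (Set.Iic (0 : ℝ) ∪ Set.Ioc 0 (1 / 2)))
      ((fun r : ℝ => 2 / (5 - 2 * r)) '' (Set.Iic (0 : ℝ) ∪ Set.Ioc 0 (1 / 2))) := by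
  have hK : (fun r : ℝ => 4 * r - 2) '' (Set.Iic (0 : ℝ) ∪ Set.Ioc 0 (1 / 2))
      ⊆ Set.Iic (0 : ℝ) := by
    rintro x ⟨r, hr, rfl⟩
    have hr' : r ≤ 1 / 2 := by
      rcases hr with h | h
      · linarith [h.out]
      · exact h.2
    simp only [Set.mem_Iic]; linarith
  have hL : (fun r : ℝ => 2 / (5 - 2 * r)) '' (Set.Iic (0 : ℝ) ∪ Set.Ioc 0 (1 / 2))
      ⊆ Set.Ioc (0 : ℝ) (1 / 2) := by
    rintro x ⟨r, hr, rfl⟩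
    have hr' : r ≤ 1 / 2 := by
      rcases hr with h | h
      · linarith [h.out]
      · exact h.2
    have hpos : (0 : ℝ) < 5 - 2 * r := by linarith
    constructor
    · positivity
    · rw [div_le_iff₀ hpos]; linarith
  exact ⟨hK, hL, Set.disjoint_of_subset hK hL (by
    simp [Set.disjoint_left]; intro x hx hx'; linarith)⟩
end
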